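/- For the epistemic space E² = ⟨𝓔₂, mod⟩: AGM contraction is not realizable in E², but AGM revision is realizable in E². -/

import Mathlib

/-
Every state of `E²` has at most one model. Contraction must then fail already for `Ψ₁ ÷ {ω₁}`:
(C1) keeps `ω₁` among the models of the result, while (C3) demands a model outside `{ω₁}`.
Revision, on the other hand, only ever needs results with at most one model: keep `Ψ` when it is
consistent with `A`, and otherwise move to the state whose model is the least element of `A`
(for a fixed linear order of the worlds).
-/

open Set

/-- `minSet r S` is the set of `r`-minimal elements of `S`:
`min(S, r) = {ω ∈ S : r ω ω' for all ω' ∈ S}`. -/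
def minSet {Ω : Type*} (r : Ω → Ω → Prop) (S : Set Ω) : Set Ω :=
  {ω ∈ S | ∀ ω' ∈ S, r ω ω'}

/-- A linear order as a relation: total, antisymmetric and transitive. -/
def IsLinRel {Ω : Type*} (r : Ω → Ω → Prop) : Prop :=
  (∀ a b, r a b ∨ r b a) ∧ (∀ a b, r a b → r b a → a = b) ∧
    (∀ a b c, r a b → r b c → r a c)

/-- AGM contraction operator for the epistemic space `⟨E, md⟩` (postulates C1–C7,
formulated on model sets). -/
def IsContraction {Ω E : Type*} (md : E → Set Ω) (c : E → Set Ω → E) : Prop :=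
  ∀ (Ψ : E) (A B : Set Ω),
    md Ψ ⊆ md (c Ψ A) ∧
    (¬ md Ψ ⊆ A → md (c Ψ A) ⊆ md Ψ) ∧
    (A ≠ Set.univ → ¬ md (c Ψ A) ⊆ A) ∧
    md (c Ψ A) ∩ A ⊆ md Ψ ∧
    md (c Ψ (A ∩ B)) ⊆ md (c Ψ A) ∪ md (c Ψ B) ∧
    (¬ md (c Ψ (A ∩ B)) ⊆ B → md (c Ψ B) ⊆ md (c Ψ (A ∩ B)))

/-- AGM revision operator for the epistemic space `⟨E, md⟩` (postulates R1–R6,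
formulated on model sets). -/
def IsRevision {Ω E : Type*} (md : E → Set Ω) (s : E → Set Ω → E) : Prop :=
  ∀ (Ψ : E) (A B : Set Ω),
    md (s Ψ A) ⊆ A ∧
    (md Ψ ∩ A ≠ ∅ → md (s Ψ A) = md Ψ ∩ A) ∧
    (A ≠ ∅ → md (s Ψ A) ≠ ∅) ∧
    md (s Ψ A) ∩ B ⊆ md (s Ψ (A ∩ B)) ∧
    (md (s Ψ A) ∩ B ≠ ∅ → md (s Ψ (A ∩ B)) ⊆ md (s Ψ A) ∩ B)

/-- Postulate (ZC). -/
def ZC {Ω E : Type*} (md : E → Set Ω) : Prop :=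
  ∀ (Ψ : E) (M : Set Ω), md Ψ ⊆ M → ∃ Ψ' : E, md Ψ' = M

/-- Postulate (ZR1). -/
def ZR1 {Ω E : Type*} (md : E → Set Ω) : Prop :=
  ∀ ω : Ω, ∃ Ψ : E, md Ψ = {ω}

/-- Postulate (ZR2). -/
def ZR2 {Ω E : Type*} (md : E → Set Ω) : Prop :=
  ∀ (Ψ : E) (M : Set Ω), M ⊆ md Ψ → ∃ Ψ' : E, md Ψ' = M

/-- Postulate (Unbiased). -/
def Unbiased {Ω E : Type*} (md : E → Set Ω) : Prop :=
  ∀ M : Set Ω, ∃ Ψ : E, md Ψ = M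

/-- Maxichoice contraction operator. -/
def IsMaxichoiceContraction {Ω E : Type*} (md : E → Set Ω) (c : E → Set Ω → E) : Prop :=
  IsContraction md c ∧
    ∀ Ψ : E, ∃ r : Ω → Ω → Prop, IsLinRel r ∧ ∀ A : Set Ω,
      (¬ md Ψ ⊆ A → md (c Ψ A) = md Ψ) ∧
      (md Ψ ⊆ A → md (c Ψ A) = md Ψ ∪ minSet r Aᶜ)

/-- Linear contraction operator: a maxichoice contraction operator based on one
single linear order for all epistemic states. -/
def IsLinearContraction {Ω E : Type*} (md : E → Set Ω) (c : E → Set Ω → E) : Prop :=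
  IsContraction md c ∧
    ∃ r : Ω → Ω → Prop, IsLinRel r ∧ ∀ (Ψ : E) (A : Set Ω),
      (¬ md Ψ ⊆ A → md (c Ψ A) = md Ψ) ∧
      (md Ψ ⊆ A → md (c Ψ A) = md Ψ ∪ minSet r Aᶜ)

/-- Full meet contraction operator. -/
def IsFullMeetContraction {Ω E : Type*} (md : E → Set Ω) (c : E → Set Ω → E) : Prop :=
  IsContraction md c ∧
    ∀ (Ψ : E) (A : Set Ω),
      (¬ md Ψ ⊆ A → md (c Ψ A) = md Ψ) ∧
      (md Ψ ⊆ A → md (c Ψ A) = md Ψ ∪ Aᶜ)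

/-- Maxichoice revision operator. -/
def IsMaxichoiceRevision {Ω E : Type*} (md : E → Set Ω) (s : E → Set Ω → E) : Prop :=
  IsRevision md s ∧
    ∀ Ψ : E, ∃ r : Ω → Ω → Prop, IsLinRel r ∧ ∀ A : Set Ω,
      (md Ψ ∩ A ≠ ∅ → md (s Ψ A) = md Ψ ∩ A) ∧
      (md Ψ ∩ A = ∅ → md (s Ψ A) = minSet r A)

/-- Linear revision operator: a maxichoice revision operator based on one single
linear order for all epistemic states. -/
def IsLinearRevision {Ω E : Type*} (md : E → Set Ω) (s : E → Set Ω → E) : Prop :=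
  IsRevision md s ∧
    ∃ r : Ω → Ω → Prop, IsLinRel r ∧ ∀ (Ψ : E) (A : Set Ω),
      (md Ψ ∩ A ≠ ∅ → md (s Ψ A) = md Ψ ∩ A) ∧
      (md Ψ ∩ A = ∅ → md (s Ψ A) = minSet r A)

/-- Full meet revision operator. -/
def IsFullMeetRevision {Ω E : Type*} (md : E → Set Ω) (s : E → Set Ω → E) : Prop :=
  IsRevision md s ∧
    ∀ (Ψ : E) (A : Set Ω),
      (md Ψ ∩ A ≠ ∅ → md (s Ψ A) = md Ψ ∩ A) ∧
      (md Ψ ∩ A = ∅ → md (s Ψ A) = A)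


/-- The epistemic space `E²` over `Ω₂ = Fin 4` (worlds `ω₁, ω₂, ω₃, ω₄`):
five states `Ψ₁, Ψ₂, Ψ₃, Ψ₄, Ψ_⊥` with `mod Ψᵢ = {ωᵢ}` and `mod Ψ_⊥ = ∅`. -/
def md2 : Fin 5 → Set (Fin 4) := ![{0}, {1}, {2}, {3}, ∅]

section MinSet

variable {Ω : Type*}

theorem minSet_subset (r : Ω → Ω → Prop) (S : Set Ω) : minSet r S ⊆ S :=
  fun _ h => h.1

theorem minSet_inter_subset (r : Ω → Ω → Prop) (S B : Set Ω) :
    minSet r S ∩ B ⊆ minSet r (S ∩ B) :=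
  fun _ ⟨⟨hxS, hmin⟩, hxB⟩ => ⟨⟨hxS, hxB⟩, fun y hy => hmin y hy.1⟩

theorem minSet_subsingleton [PartialOrder Ω] (S : Set Ω) : (minSet (· ≤ ·) S).Subsingleton :=
  fun _ hx _ hy => le_antisymm (hx.2 _ hy.1) (hy.2 _ hx.1)

theorem minSet_inter_subset_of_nonempty [PartialOrder Ω] {S B : Set Ω}
    (h : (minSet (· ≤ ·) S ∩ B).Nonempty) :
    minSet (· ≤ ·) (S ∩ B) ⊆ minSet (· ≤ ·) S ∩ B := by
  obtain ⟨x, hx, hxB⟩ := h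
  intro y hy
  have hyx : y = x := le_antisymm (hy.2 x ⟨hx.1, hxB⟩) (hx.2 y hy.1.1)
  exact hyx ▸ ⟨hx, hxB⟩

theorem minSet_nonempty [LinearOrder Ω] [WellFoundedLT Ω] {S : Set Ω} (hS : S.Nonempty) :
    (minSet (· ≤ ·) S).Nonempty := by
  obtain ⟨x, hxS, hmin⟩ := wellFounded_lt.has_min S hS
  exact ⟨x, hxS, fun y hy => not_lt.mp (hmin y hy)⟩

end MinSet

theorem Set.Subsingleton.subset_of_inter_nonempty {α : Type*} {s t : Set α} (hs : s.Subsingleton)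
    (h : (s ∩ t).Nonempty) : s ⊆ t := by
  obtain ⟨x, hxs, hxt⟩ := h
  exact fun y hy => hs hy hxs ▸ hxt

section Subsingleton

variable {Ω E : Type*} {md : E → Set Ω}

theorem not_isContraction_of_subsingleton [Nontrivial Ω] (hsub : ∀ Ψ, (md Ψ).Subsingleton)
    {Ψ : E} (hΨ : (md Ψ).Nonempty) (c : E → Set Ω → E) : ¬ IsContraction md c := by
  intro hc
  obtain ⟨ω, hω⟩ := hΨ
  obtain ⟨hC1, -, hC3, -⟩ := hc Ψ {ω} ∅
  obtain ⟨x, hx, hxω⟩ := not_subset.mp (hC3 (singleton_ne_univ ω))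
  exact hxω (hsub _ hx (hC1 hω))

open Classical in
noncomputable def revisionByMin (md : E → Set Ω) (pick : Set Ω → E) (Ψ : E) (A : Set Ω) : E :=
  if (md Ψ ∩ A).Nonempty then Ψ else pick A

theorem isRevision_revisionByMin [LinearOrder Ω] [WellFoundedLT Ω]
    (hsub : ∀ Ψ, (md Ψ).Subsingleton) {pick : Set Ω → E}
    (hpick : ∀ A, md (pick A) = minSet (· ≤ ·) A) : IsRevision md (revisionByMin md pick) := by
  intro Ψ A B
  by_cases hA : (md Ψ ∩ A).Nonempty
  · have hΨA : md Ψ ⊆ A := (hsub Ψ).subset_of_inter_nonempty hA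
    have hmeet : (md Ψ ∩ B).Nonempty → (md Ψ ∩ (A ∩ B)).Nonempty :=
      fun ⟨x, hxΨ, hxB⟩ => ⟨x, hxΨ, hΨA hxΨ, hxB⟩
    simp only [revisionByMin, if_pos hA, ← nonempty_iff_ne_empty]
    refine ⟨hΨA, fun _ => (inter_eq_left.mpr hΨA).symm, fun _ => hA.mono inter_subset_left,
      fun x hx => ?_, fun hB => ?_⟩
    · rw [if_pos (hmeet ⟨x, hx⟩)]
      exact hx.1
    · rw [if_pos (hmeet hB)]
      exact subset_inter subset_rfl ((hsub Ψ).subset_of_inter_nonempty hB)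
  · have hAB : ¬ (md Ψ ∩ (A ∩ B)).Nonempty := fun h =>
      hA (h.mono (inter_subset_inter_right _ inter_subset_left))
    simp only [revisionByMin, if_neg hA, if_neg hAB, hpick, ← nonempty_iff_ne_empty]
    exact ⟨minSet_subset _ A, fun h => absurd h hA, minSet_nonempty,
      minSet_inter_subset _ A B, minSet_inter_subset_of_nonempty⟩

theorem exists_isRevision_of_subsingleton [LinearOrder Ω] [WellFoundedLT Ω]
    (hsub : ∀ Ψ, (md Ψ).Subsingleton) (hreal : ∀ M : Set Ω, M.Subsingleton → ∃ Ψ, md Ψ = M) :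
    ∃ s, IsRevision md s := by
  choose pick hpick using fun A : Set Ω => hreal _ (minSet_subsingleton A)
  exact ⟨_, isRevision_revisionByMin hsub hpick⟩

end Subsingleton

theorem md2_subsingleton (Ψ : Fin 5) : (md2 Ψ).Subsingleton := by
  fin_cases Ψ <;> simp [md2]

theorem exists_md2_eq {M : Set (Fin 4)} (hM : M.Subsingleton) : ∃ Ψ, md2 Ψ = M := by
  obtain rfl | ⟨ω, rfl⟩ := hM.eq_empty_or_singleton
  · exact ⟨4, rfl⟩
  · exact ⟨ω.castSucc, by fin_cases ω <;> rfl⟩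

/-- AGM contraction is not realizable in `E²`, but AGM revision
is realizable in `E²`. -/
theorem E2_no_contraction_but_revision :
    (¬ ∃ c : Fin 5 → Set (Fin 4) → Fin 5, IsContraction md2 c) ∧
      (∃ s : Fin 5 → Set (Fin 4) → Fin 5, IsRevision md2 s) :=
  ⟨fun ⟨c, hc⟩ => not_isContraction_of_subsingleton md2_subsingleton
      (Ψ := 0) (by simp [md2]) c hc,
    exists_isRevision_of_subsingleton md2_subsingleton fun _ => exists_md2_eq⟩
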